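/- Let f be a t-sparse multilinear polynomial on {0,1}^n with coefficients bounded in absolute value by B, and let f^d be the truncation of f obtained by deleting all terms of degree greater than d. For any locally α-smooth distribution D, Pr_{x∼D}[f(x) ≠ f^d(x)] ≤ t·(α/(1+α))^d, and consequently E_{x∼D}[(f(x) − f^d(x))²] ≤ 4t³B²·(α/(1+α))^d. -/

import Mathlib

open Finset

/-!
If `f x ≠ f^d x`, some monomial `∏_{i ∈ T} x_i` with `c_T ≠ 0` and `|T| > d` equals `1` at `x`, so `x`
lies in the subcube `{x | x_i = 1 for i ∈ T}`. Flipping one coordinate `x_a` from `1` to `0` is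
injective and, by local smoothness, loses at most a factor `α`; hence the half of any
flip-closed set with `x_a = 1` carries at most an `α / (1 + α)` fraction of its mass, and a subcube
with `|T| > d` has mass at most `(α / (1 + α))^d`. A union bound over the at most `t` such
monomials gives the first claim. For the second, `|f - f^d| ≤ t B` pointwise and `f - f^d` vanishes
off the event `f ≠ f^d`.
-/

theorem Finset.sum_biUnion_le_sum_sum {ι κ M : Type*} [DecidableEq κ] [AddCommMonoid M]
    [PartialOrder M] [IsOrderedAddMonoid M] {s : Finset ι} {t : ι → Finset κ} {w : κ → M}
    (hw : ∀ x, 0 ≤ w x) :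
    ∑ x ∈ s.biUnion t, w x ≤ ∑ i ∈ s, ∑ x ∈ t i, w x := by
  calc ∑ x ∈ s.biUnion t, w x = ∑ x ∈ (s.sigma t).image Sigma.snd, w x := by
        congr 1; ext x; simp
    _ ≤ ∑ p ∈ s.sigma t, w p.2 := sum_image_le_of_nonneg fun _ _ => hw _
    _ = ∑ i ∈ s, ∑ x ∈ t i, w x := sum_sigma _ _ _

theorem hammingDist_update_of_ne {ι β : Type*} [Fintype ι] [DecidableEq ι] [DecidableEq β]
    {x : ι → β} {a : ι} {b : β} (h : x a ≠ b) : hammingDist x (Function.update x a b) = 1 := by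
  rw [hammingDist, card_eq_one]
  refine ⟨a, ?_⟩
  ext j
  by_cases hj : j = a
  · subst hj; simpa using h
  · simp [hj]

theorem abs_sum_mul_le_card_mul {κ : Type*} {S : Finset κ} {c m : κ → ℝ} {B : ℝ}
    (hc : ∀ T ∈ S, |c T| ≤ B) (hm : ∀ T ∈ S, |m T| ≤ 1) :
    |∑ T ∈ S, c T * m T| ≤ #{T ∈ S | c T ≠ 0} * B := by
  rw [← sum_filter_of_ne fun T _ h => left_ne_zero_of_mul h]
  calc |∑ T ∈ S with c T ≠ 0, c T * m T| ≤ ∑ T ∈ S with c T ≠ 0, |c T * m T| :=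
        abs_sum_le_sum_abs _ _
    _ ≤ ∑ T ∈ S with c T ≠ 0, B := by
        refine sum_le_sum fun T hT => ?_
        obtain ⟨hTS, -⟩ := mem_filter.1 hT
        rw [abs_mul]
        simpa using mul_le_mul (hc T hTS) (hm T hTS) (abs_nonneg _) ((abs_nonneg _).trans (hc T hTS))
    _ = _ := by rw [sum_const, nsmul_eq_mul]

theorem sum_mul_sq_le_of_abs_le {κ : Type*} [Fintype κ] {D g : κ → ℝ} {M : ℝ}
    (hD0 : ∀ x, 0 ≤ D x) (hg : ∀ x, |g x| ≤ M) :
    ∑ x, D x * g x ^ 2 ≤ M ^ 2 * ∑ x with g x ≠ 0, D x := by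
  rw [← sum_filter_of_ne fun x _ h => by simpa using right_ne_zero_of_mul h, mul_sum]
  refine sum_le_sum fun x _ => ?_
  rw [mul_comm]
  exact mul_le_mul_of_nonneg_right (sq_le_sq' (abs_le.1 (hg x)).1 (abs_le.1 (hg x)).2) (hD0 x)

section Cube

variable {ι : Type*} [Fintype ι] [DecidableEq ι]

def IsLocallySmooth (α : ℝ) (D : (ι → Bool) → ℝ) : Prop :=
  ∀ x x' : ι → Bool, hammingDist x x' = 1 → D x ≤ α * D x'

def subcube (T : Finset ι) : Finset (ι → Bool) := univ.filter fun x => ∀ i ∈ T, x i = true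

theorem subcube_insert (a : ι) (T : Finset ι) :
    subcube (insert a T) = (subcube T).filter fun x => x a = true := by
  ext x; simp [subcube, and_comm]

theorem prod_ite_apply_eq_ite_mem_subcube (T : Finset ι) (x : ι → Bool) :
    (∏ i ∈ T, if x i then (1 : ℝ) else 0) = if x ∈ subcube T then 1 else 0 := by
  simp [subcube, prod_boole]

variable {α : ℝ} {D : (ι → Bool) → ℝ}

theorem sum_filter_apply_true_le (hD0 : ∀ x, 0 ≤ D x) (hα : 0 ≤ α)
    (hsmooth : IsLocallySmooth α D) (s : Finset (ι → Bool)) (a : ι)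
    (hs : ∀ x ∈ s, Function.update x a false ∈ s) :
    ∑ x ∈ s with x a = true, D x ≤ α * ∑ x ∈ s with x a = false, D x := by
  have hinj : Set.InjOn (fun x : ι → Bool => Function.update x a false)
      ↑(s.filter fun x => x a = true) := by
    intro x hx y hy hxy
    funext j
    by_cases hj : j = a
    · subst hj; rw [(mem_filter.1 hx).2, (mem_filter.1 hy).2]
    · simpa [hj] using congrFun hxy j
  calc ∑ x ∈ s with x a = true, D x
      ≤ ∑ x ∈ s with x a = true, α * D (Function.update x a false) :=
        sum_le_sum fun x hx => hsmooth _ _ (hammingDist_update_of_ne (by simp [(mem_filter.1 hx).2]))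
    _ = α * ∑ y ∈ (s.filter fun x => x a = true).image (Function.update · a false), D y := by
        rw [sum_image hinj, mul_sum]
    _ ≤ α * ∑ x ∈ s with x a = false, D x := by
        refine mul_le_mul_of_nonneg_left (sum_le_sum_of_subset_of_nonneg ?_ fun y _ _ => hD0 y) hα
        intro y hy
        obtain ⟨x, hx, rfl⟩ := mem_image.1 hy
        simp [hs x (mem_filter.1 hx).1]

theorem sum_filter_apply_true_le_div_mul_sum (hD0 : ∀ x, 0 ≤ D x) (hα : 0 ≤ α)
    (hsmooth : IsLocallySmooth α D) (s : Finset (ι → Bool)) (a : ι)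
    (hs : ∀ x ∈ s, Function.update x a false ∈ s) :
    ∑ x ∈ s with x a = true, D x ≤ α / (1 + α) * ∑ x ∈ s, D x := by
  have hsplit := sum_filter_add_sum_filter_not s (fun x => x a = true) D
  simp only [Bool.not_eq_true] at hsplit
  have hflip := sum_filter_apply_true_le hD0 hα hsmooth s a hs
  rw [div_mul_eq_mul_div, le_div_iff₀ (by linarith), ← hsplit]
  linarith

theorem sum_subcube_le (hD0 : ∀ x, 0 ≤ D x) (hα : 0 ≤ α) (hsmooth : IsLocallySmooth α D)
    (T : Finset ι) : ∑ x ∈ subcube T, D x ≤ (α / (1 + α)) ^ #T * ∑ x, D x := by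
  induction T using Finset.induction_on with
  | empty => simp [subcube]
  | insert a T ha ih =>
    have hclosed : ∀ x ∈ subcube T, Function.update x a false ∈ subcube T := by
      intro x hx
      simp only [subcube, mem_filter, mem_univ, true_and] at hx ⊢
      intro i hi
      rw [Function.update_of_ne (ne_of_mem_of_not_mem hi ha)]
      exact hx i hi
    rw [subcube_insert, card_insert_of_notMem ha, pow_succ', mul_assoc]
    calc ∑ x ∈ subcube T with x a = true, D x ≤ α / (1 + α) * ∑ x ∈ subcube T, D x :=
          sum_filter_apply_true_le_div_mul_sum hD0 hα hsmooth _ a hclosed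
      _ ≤ α / (1 + α) * ((α / (1 + α)) ^ #T * ∑ x, D x) := by gcongr

theorem mem_biUnion_subcube_of_sum_ne_zero {S : Finset (Finset ι)} {c : Finset ι → ℝ}
    {x : ι → Bool} (h : ∑ T ∈ S, c T * ∏ i ∈ T, (if x i then (1 : ℝ) else 0) ≠ 0) :
    x ∈ {T ∈ S | c T ≠ 0}.biUnion subcube := by
  obtain ⟨T, hT, hne⟩ := exists_ne_zero_of_sum_ne_zero h
  rw [prod_ite_apply_eq_ite_mem_subcube] at hne
  by_cases hx : x ∈ subcube T
  · exact mem_biUnion.2 ⟨T, mem_filter.2 ⟨hT, left_ne_zero_of_mul hne⟩, hx⟩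
  · simp [hx] at hne

theorem sum_filter_sum_ne_zero_le (hD0 : ∀ x, 0 ≤ D x) (hα : 0 ≤ α)
    (hsmooth : IsLocallySmooth α D) (S : Finset (Finset ι)) (c : Finset ι → ℝ) {d : ℕ}
    (hS : ∀ T ∈ S, d ≤ #T) :
    ∑ x ∈ univ with ∑ T ∈ S, c T * ∏ i ∈ T, (if x i then (1 : ℝ) else 0) ≠ 0, D x ≤
      #{T ∈ S | c T ≠ 0} * (α / (1 + α)) ^ d * ∑ x, D x := by
  have hr0 : 0 ≤ α / (1 + α) := by positivity
  have hr1 : α / (1 + α) ≤ 1 := div_le_one_of_le₀ (by linarith) (by linarith)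
  calc _ ≤ ∑ x ∈ {T ∈ S | c T ≠ 0}.biUnion subcube, D x :=
        sum_le_sum_of_subset_of_nonneg
          (fun x hx => mem_biUnion_subcube_of_sum_ne_zero (mem_filter.1 hx).2)
          (fun x _ _ => hD0 x)
    _ ≤ ∑ T ∈ S with c T ≠ 0, ∑ x ∈ subcube T, D x := sum_biUnion_le_sum_sum hD0
    _ ≤ ∑ T ∈ S with c T ≠ 0, (α / (1 + α)) ^ d * ∑ x, D x := by
        refine sum_le_sum fun T hT => (sum_subcube_le hD0 hα hsmooth T).trans ?_
        exact mul_le_mul_of_nonneg_right (pow_le_pow_of_le_one hr0 hr1 (hS T (mem_filter.1 hT).1))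
          (sum_nonneg fun x _ => hD0 x)
    _ = _ := by rw [sum_const, nsmul_eq_mul, mul_assoc]

end Cube

/-- Truncating a t-sparse multilinear polynomial (coefficients
bounded by B) at degree d changes its value with probability at most
t·(α/(1+α))^d, and the squared error is at most 4t³B²·(α/(1+α))^d, under any
locally α-smooth distribution. -/
theorem truncation_error (n t d : ℕ) (B : ℝ)
    (c : Finset (Fin n) → ℝ)
    (hsparse : (univ.filter (fun T : Finset (Fin n) => c T ≠ 0)).card ≤ t)
    (hB : ∀ T, |c T| ≤ B)
    (α : ℝ) (hα : 1 ≤ α)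
    (D : (Fin n → Bool) → ℝ) (hD0 : ∀ x, 0 ≤ D x) (hD1 : ∑ x, D x = 1)
    (hsmooth : ∀ x x' : Fin n → Bool, hammingDist x x' = 1 → D x ≤ α * D x')
    (f fd : (Fin n → Bool) → ℝ)
    (hf : ∀ x, f x = ∑ T : Finset (Fin n), c T * ∏ i ∈ T, (if x i then (1 : ℝ) else 0))
    (hfd : ∀ x, fd x = ∑ T ∈ univ.filter (fun T : Finset (Fin n) => T.card ≤ d),
        c T * ∏ i ∈ T, (if x i then (1 : ℝ) else 0)) :
    (∑ x ∈ univ.filter (fun x : Fin n → Bool => f x ≠ fd x), D x ≤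
        t * (α / (1 + α)) ^ d) ∧
    (∑ x, D x * (f x - fd x) ^ 2 ≤ 4 * t ^ 3 * B ^ 2 * (α / (1 + α)) ^ d) := by
  set S := univ.filter fun T : Finset (Fin n) => ¬T.card ≤ d
  have hdiff : ∀ x, f x - fd x = ∑ T ∈ S, c T * ∏ i ∈ T, (if x i then (1 : ℝ) else 0) := by
    intro x
    rw [hf, hfd, ← sum_filter_add_sum_filter_not univ fun T => T.card ≤ d]
    ring
  have hcard : (#{T ∈ S | c T ≠ 0} : ℝ) ≤ t :=
    mod_cast (card_le_card (filter_subset_filter _ (subset_univ S))).trans hsparse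
  have hprob : ∑ x with f x ≠ fd x, D x ≤ t * (α / (1 + α)) ^ d := by
    rw [filter_congr fun x _ => by rw [← sub_ne_zero, hdiff x]]
    refine (sum_filter_sum_ne_zero_le hD0 (by linarith) hsmooth S c
      fun T hT => (not_le.1 (mem_filter.1 hT).2).le).trans ?_
    rw [hD1, mul_one]
    gcongr
  have hbound : ∀ x, |f x - fd x| ≤ t * B := by
    intro x
    rw [hdiff]
    refine (abs_sum_mul_le_card_mul (fun T _ => hB T) fun T _ => ?_).trans
      (by gcongr; exact (abs_nonneg _).trans (hB ∅))
    rw [prod_ite_apply_eq_ite_mem_subcube]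
    split_ifs <;> simp
  refine ⟨hprob, ?_⟩
  calc ∑ x, D x * (f x - fd x) ^ 2 ≤ (t * B) ^ 2 * ∑ x with f x - fd x ≠ 0, D x :=
        sum_mul_sq_le_of_abs_le hD0 hbound
    _ ≤ (t * B) ^ 2 * (t * (α / (1 + α)) ^ d) := by
        simp_rw [sub_ne_zero]
        gcongr
    _ ≤ 4 * t ^ 3 * B ^ 2 * (α / (1 + α)) ^ d := by
        have : 0 ≤ (t : ℝ) ^ 3 * B ^ 2 * (α / (1 + α)) ^ d := by positivity
        nlinarith
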